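/- For every integer d ≥ 3 there exists a constant k = k(d) > 0 such that for all integers N ≥ 1, the inverse spectral gap of the birth-and-death toy model satisfies S(N,d) ≤ k; that is, the spectral gap stays bounded away from zero uniformly in N. -/

import Mathlib

/-!
Birth-and-death toy model for droplet evolution: the inverse spectral gap

`S(N,d)` stays bounded uniformly in `N` when `d ≥ 3`.
-/

open Finset

noncomputable section

/-- The exponent `α = (d-1)/d`. -/
def alphaOf (d : ℕ) : ℝ := ((d : ℝ) - 1) / d

/-- Normalization `Z_N = ∑_{x=0}^{N^d} exp(-x^α)`. -/
def Ztoy (d N : ℕ) : ℝ :=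
  ∑ x ∈ Finset.range (N ^ d + 1), Real.exp (-(x : ℝ) ^ alphaOf d)

/-- The reversible probability measure `μ_N(x) = exp(-x^α)/Z_N`. -/
def muToy (d N : ℕ) (x : ℕ) : ℝ :=
  Real.exp (-(x : ℝ) ^ alphaOf d) / Ztoy d N

/-- The birth rate `b(x) = (max(x,1))^α`. -/
def bToy (d : ℕ) (x : ℕ) : ℝ := ((max x 1 : ℕ) : ℝ) ^ alphaOf d

/-- Dirichlet form `E_N(f) = ∑_{x=0}^{N^d-1} μ_N(x) b(x) (f(x+1)-f(x))²`. -/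
def dirToy (d N : ℕ) (f : ℕ → ℝ) : ℝ :=
  ∑ x ∈ Finset.range (N ^ d), muToy d N x * bToy d x * (f (x + 1) - f x) ^ 2

/-- Mean of `f` under `μ_N`. -/
def meanToy (d N : ℕ) (f : ℕ → ℝ) : ℝ :=
  ∑ x ∈ Finset.range (N ^ d + 1), muToy d N x * f x

/-- Variance of `f` under `μ_N`. -/
def varToy (d N : ℕ) (f : ℕ → ℝ) : ℝ :=
  ∑ x ∈ Finset.range (N ^ d + 1), muToy d N x * (f x - meanToy d N f) ^ 2

/-- The inverse spectral gap `S(N,d)`: the smallest constant `c` such that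
`Var_{μ_N}(f) ≤ c · E_N(f)` for all `f`. -/
def invGapToy (d N : ℕ) : ℝ :=
  sInf {c : ℝ | ∀ f : ℕ → ℝ, varToy d N f ≤ c * dirToy d N f}

/-!
With the Lyapunov function `V x = exp (x ^ α / 2)`, the inequality
`(1 - q / p) a² + (1 - p / q) b² ≤ (b - a)²` on every edge, summed against the conductances
`μ b`, gives `∑ μ x (-LV / V) x g x² ≤ E(g)`. Since `x ^ α` grows with increments
`t ≈ α x ^ (α - 1)`, one gets `-LV / V ≈ x ^ α t² / 4 ≈ α² x ^ (3α - 2) / 4`, which is bounded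
below exactly when `α ≥ 2 / 3`, i.e. `d ≥ 3`. On the finite box `{x < R}` where this fails,
`g x²` with `g 0 = 0` is bounded by Cauchy–Schwarz along the path from `0` at a cost `R² e^R`
independent of `N`. Applied to `g = f - f 0` this bounds the variance.
-/

theorem Finset.sum_mul_sq_sub_sum_mul_le {ι : Type*} {s : Finset ι} {p : ι → ℝ}
    (hp : ∑ i ∈ s, p i = 1) (f : ι → ℝ) (a : ℝ) :
    ∑ i ∈ s, p i * (f i - ∑ j ∈ s, p j * f j) ^ 2 ≤ ∑ i ∈ s, p i * (f i - a) ^ 2 := by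
  have expand : ∀ b, ∑ i ∈ s, p i * (f i - b) ^ 2 =
      ∑ i ∈ s, p i * f i ^ 2 - 2 * b * ∑ i ∈ s, p i * f i + b ^ 2 := by
    intro b
    rw [sum_congr rfl fun i _ => show p i * (f i - b) ^ 2 =
        p i * f i ^ 2 - 2 * b * (p i * f i) + b ^ 2 * p i by ring,
      sum_add_distrib, sum_sub_distrib, ← mul_sum, ← mul_sum, hp, mul_one]
  rw [expand, expand]
  nlinarith [sq_nonneg (∑ j ∈ s, p j * f j - a)]

namespace BirthDeath

def energy (c : ℕ → ℝ) (M : ℕ) (g : ℕ → ℝ) : ℝ :=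
  ∑ x ∈ range M, c x * (g (x + 1) - g x) ^ 2

/-- `μ x · (-LV / V) x` for the chain with conductances `c = μ b` and generator `L`. -/
def driftWeight (c V : ℕ → ℝ) (M x : ℕ) : ℝ :=
  (if x < M then c x * (1 - V (x + 1) / V x) else 0) +
    if x = 0 then 0 else c (x - 1) * (1 - V (x - 1) / V x)

variable {c V : ℕ → ℝ}

theorem energy_sub_const (c : ℕ → ℝ) (M : ℕ) (g : ℕ → ℝ) (a : ℝ) :
    energy c M (fun x => g x - a) = energy c M g := by
  simp only [energy, sub_sub_sub_cancel_right]

theorem one_sub_div_mul_sq_add_le_sq_sub {p q : ℝ} (hp : 0 < p) (hq : 0 < q) (a b : ℝ) :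
    (1 - q / p) * a ^ 2 + (1 - p / q) * b ^ 2 ≤ (b - a) ^ 2 := by
  have key : (b - a) ^ 2 - ((1 - q / p) * a ^ 2 + (1 - p / q) * b ^ 2) =
      (a * q - b * p) ^ 2 / (p * q) := by
    field_simp
    ring
  have : 0 ≤ (a * q - b * p) ^ 2 / (p * q) := by positivity
  linarith

theorem sum_driftWeight_mul_sq_le_energy (hc : ∀ x, 0 ≤ c x) (hV : ∀ x, 0 < V x)
    (M : ℕ) (g : ℕ → ℝ) :
    ∑ x ∈ range (M + 1), driftWeight c V M x * g x ^ 2 ≤ energy c M g := by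
  have regroup : ∑ x ∈ range (M + 1), driftWeight c V M x * g x ^ 2 =
      ∑ x ∈ range M, c x *
        ((1 - V (x + 1) / V x) * g x ^ 2 + (1 - V x / V (x + 1)) * g (x + 1) ^ 2) := by
    simp only [driftWeight, add_mul, sum_add_distrib, ite_mul, zero_mul]
    rw [sum_range_succ, sum_range_succ']
    simp only [lt_irrefl, if_false, add_zero, Nat.add_sub_cancel, Nat.succ_ne_zero, if_true,
      ← sum_add_distrib]
    refine sum_congr rfl fun x hx => ?_
    rw [if_pos (mem_range.mp hx)]
    ring
  rw [regroup, energy]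
  exact sum_le_sum fun x _ =>
    mul_le_mul_of_nonneg_left (one_sub_div_mul_sq_add_le_sq_sub (hV x) (hV (x + 1)) _ _) (hc x)

theorem neg_le_driftWeight (hc : ∀ x, 0 ≤ c x) (hV : ∀ x, 0 < V x) (hmono : Monotone V)
    (hdouble : ∀ x, V (x + 1) ≤ 2 * V x) (M x : ℕ) : -c x ≤ driftWeight c V M x := by
  have right : -c x ≤ if x < M then c x * (1 - V (x + 1) / V x) else 0 := by
    split_ifs
    · have : V (x + 1) / V x ≤ 2 := (div_le_iff₀ (hV x)).2 (hdouble x)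
      nlinarith [hc x]
    · linarith [hc x]
  have left : 0 ≤ if x = 0 then 0 else c (x - 1) * (1 - V (x - 1) / V x) := by
    split_ifs
    · rfl
    · exact mul_nonneg (hc _) (sub_nonneg.2 ((div_le_one (hV x)).2 (hmono (Nat.sub_le x 1))))
  rw [driftWeight]
  linarith

theorem sq_le_mul_sum_sq_sub {g : ℕ → ℝ} (hg : g 0 = 0) (x : ℕ) :
    g x ^ 2 ≤ x * ∑ z ∈ range x, (g (z + 1) - g z) ^ 2 := by
  have htel : g x = ∑ z ∈ range x, (g (z + 1) - g z) := by
    rw [sum_range_sub, hg, sub_zero]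
  simpa [htel] using sq_sum_le_card_mul_sum_sq (s := range x) (f := fun z => g (z + 1) - g z)

theorem mul_sq_le_energy (hc : ∀ x, 0 ≤ c x) {g : ℕ → ℝ} (hg : g 0 = 0) {p K : ℝ}
    (hp : 0 ≤ p) (hK : 0 ≤ K) {x M : ℕ} (hxM : x ≤ M) (hpc : ∀ z < x, p ≤ K * c z) :
    p * g x ^ 2 ≤ x * K * energy c M g := by
  have partial_le : ∑ z ∈ range x, c z * (g (z + 1) - g z) ^ 2 ≤ energy c M g :=
    sum_le_sum_of_subset_of_nonneg (range_subset_range.2 hxM)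
      fun z _ _ => mul_nonneg (hc z) (sq_nonneg _)
  calc p * g x ^ 2 ≤ x * ∑ z ∈ range x, p * (g (z + 1) - g z) ^ 2 := by
        rw [← mul_sum, mul_left_comm]
        exact mul_le_mul_of_nonneg_left (sq_le_mul_sum_sq_sub hg x) hp
    _ ≤ x * ∑ z ∈ range x, K * (c z * (g (z + 1) - g z) ^ 2) := by
        refine mul_le_mul_of_nonneg_left (sum_le_sum fun z hz => ?_) (Nat.cast_nonneg x)
        rw [← mul_assoc]
        exact mul_le_mul_of_nonneg_right (hpc z (mem_range.mp hz)) (sq_nonneg _)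
    _ ≤ x * K * energy c M g := by
        rw [← mul_sum, ← mul_assoc]
        gcongr

/-- The drift controls `g` outside `{x < R}`; inside, `g x ^ 2` is paid for along the path
from `0`. -/
theorem mul_sum_mul_sq_le_energy_of_drift {μ : ℕ → ℝ} (hμ : ∀ x, 0 ≤ μ x)
    (hc : ∀ x, 0 ≤ c x) (hV : ∀ x, 0 < V x) {M R : ℕ} {lam A B : ℝ}
    (hlam : 0 ≤ lam) (hA : 0 ≤ A) (hB : 0 ≤ B)
    (hfar : ∀ x ≤ M, R ≤ x → lam * μ x ≤ driftWeight c V M x)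
    (hnear : ∀ x < R, -(A * μ x) ≤ driftWeight c V M x)
    (hloc : ∀ x < R, ∀ z < x, μ x ≤ B * c z) {g : ℕ → ℝ} (hg : g 0 = 0) :
    lam * ∑ x ∈ range (M + 1), μ x * g x ^ 2 ≤ (1 + R * ((lam + A) * R * B)) * energy c M g := by
  have hE : 0 ≤ energy c M g := sum_nonneg fun x _ => mul_nonneg (hc x) (sq_nonneg _)
  have site : ∀ x ∈ range (M + 1), lam * (μ x * g x ^ 2) ≤
      driftWeight c V M x * g x ^ 2 + if x < R then (lam + A) * R * B * energy c M g else 0 := by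
    intro x hx
    have hxM : x ≤ M := Nat.lt_succ_iff.mp (mem_range.mp hx)
    split_ifs with hxR
    · have hpath : μ x * g x ^ 2 ≤ R * B * energy c M g :=
        (mul_sq_le_energy hc hg (hμ x) hB hxM (hloc x hxR)).trans (by gcongr)
      have := mul_le_mul_of_nonneg_right (hnear x hxR) (sq_nonneg (g x))
      nlinarith [mul_le_mul_of_nonneg_left hpath (add_nonneg hlam hA)]
    · rw [add_zero, ← mul_assoc]
      exact mul_le_mul_of_nonneg_right (hfar x hxM (not_lt.mp hxR)) (sq_nonneg _)
  have near_sum : ∑ x ∈ range (M + 1), (if x < R then (lam + A) * R * B * energy c M g else 0)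
      ≤ R * ((lam + A) * R * B * energy c M g) := by
    rw [← sum_filter]
    calc _ ≤ ∑ _x ∈ range R, (lam + A) * R * B * energy c M g :=
          sum_le_sum_of_subset_of_nonneg (fun x hx => mem_range.2 (mem_filter.1 hx).2)
            fun _ _ _ => by positivity
      _ = _ := by rw [sum_const, card_range, nsmul_eq_mul]
  calc lam * ∑ x ∈ range (M + 1), μ x * g x ^ 2
      ≤ ∑ x ∈ range (M + 1), driftWeight c V M x * g x ^ 2 +
        ∑ x ∈ range (M + 1), (if x < R then (lam + A) * R * B * energy c M g else 0) := by
        rw [mul_sum, ← sum_add_distrib]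
        exact sum_le_sum site
    _ ≤ energy c M g + R * ((lam + A) * R * B * energy c M g) :=
        add_le_add (sum_driftWeight_mul_sq_le_energy hc hV M g) near_sum
    _ = (1 + R * ((lam + A) * R * B)) * energy c M g := by ring

end BirthDeath

namespace Real

theorem rpow_le_rpow_add_mul_sub {α x y : ℝ} (hα0 : 0 ≤ α) (hα1 : α ≤ 1) (hx : 0 < x)
    (hy : 0 ≤ y) : y ^ α ≤ x ^ α + α * x ^ (α - 1) * (y - x) := by
  have bernoulli := rpow_one_add_le_one_add_mul_self
    (by linarith [div_nonneg hy hx.le] : -1 ≤ y / x - 1) hα0 hα1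
  rw [add_sub_cancel, div_rpow hy hx.le, div_le_iff₀ (rpow_pos_of_pos hx α)] at bernoulli
  rw [rpow_sub hx, rpow_one]
  calc y ^ α ≤ (1 + α * (y / x - 1)) * x ^ α := bernoulli
    _ = x ^ α + α * (x ^ α / x) * (y - x) := by field_simp

theorem rpow_add_one_sub_rpow_le {α y : ℝ} (hα0 : 0 ≤ α) (hα1 : α ≤ 1) (hy : 0 < y) :
    (y + 1) ^ α - y ^ α ≤ α * y ^ (α - 1) := by
  have := rpow_le_rpow_add_mul_sub hα0 hα1 hy (by linarith : 0 ≤ y + 1)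
  rw [add_sub_cancel_left, mul_one] at this
  linarith

theorem mul_rpow_le_rpow_add_one_sub_rpow {α y : ℝ} (hα0 : 0 ≤ α) (hα1 : α ≤ 1) (hy : 0 ≤ y) :
    α * (y + 1) ^ (α - 1) ≤ (y + 1) ^ α - y ^ α := by
  have := rpow_le_rpow_add_mul_sub hα0 hα1 (by linarith : 0 < y + 1) hy
  rw [sub_add_cancel_left, mul_neg_one] at this
  linarith

theorem add_mul_sq_le_exp_sub_exp_half {t : ℝ} (ht : 0 ≤ t) :
    t / 2 + 3 / 8 * t ^ 2 ≤ exp t - exp (t / 2) := by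
  have hquad := quadratic_le_exp_of_nonneg (by linarith : 0 ≤ t / 2)
  have hsq : exp t = exp (t / 2) * exp (t / 2) := by rw [← exp_add, add_halves]
  rw [hsq]
  nlinarith [mul_le_mul hquad (by linarith : t / 2 + (t / 2) ^ 2 / 2 ≤ exp (t / 2) - 1)
    (by positivity) (exp_pos _).le]

end Real

namespace ToyModel

open Real BirthDeath

/-- With `a = x ^ α`, `t = x ^ α - (x - 1) ^ α` and `s = (x + 1) ^ α - x ^ α`, the bracket is
`(-LV / V) x` for `V x = exp (x ^ α / 2)`. -/
theorem one_div_twentyfive_le_drift {a s t : ℝ} (ht0 : 0 < t) (ht : t ≤ 1 / 8) (hs0 : 0 ≤ s)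
    (hst : s ≤ t) (hat : 4 / 9 ≤ a * t ^ 2) :
    1 / 25 ≤ a * (1 - exp (s / 2)) + (a - t) * (exp t - exp (t / 2)) := by
  have ha : 28 ≤ a := by nlinarith
  have hexp_s : exp (s / 2) ≤ 1 + s / 2 + (s / 2) ^ 2 := by
    have := abs_exp_sub_one_sub_id_le (by rw [abs_le]; constructor <;> linarith : |s / 2| ≤ 1)
    linarith [le_abs_self (exp (s / 2) - 1 - s / 2)]
  have hgap := add_mul_sq_le_exp_sub_exp_half ht0.le
  have right : (a - t) * (t / 2 + 3 / 8 * t ^ 2) ≤ (a - t) * (exp t - exp (t / 2)) :=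
    mul_le_mul_of_nonneg_left hgap (by linarith)
  have left : a * (1 - (1 + t / 2 + (t / 2) ^ 2)) ≤ a * (1 - exp (s / 2)) := by
    refine mul_le_mul_of_nonneg_left ?_ (by linarith)
    nlinarith
  nlinarith

variable {d N : ℕ}

theorem alphaOf_nonneg (d : ℕ) : 0 ≤ alphaOf d := by
  rcases Nat.eq_zero_or_pos d with rfl | hd
  · simp [alphaOf]
  · exact div_nonneg (by simpa using (Nat.one_le_cast.2 hd : (1 : ℝ) ≤ d)) (Nat.cast_nonneg d)

theorem alphaOf_le_one (d : ℕ) : alphaOf d ≤ 1 :=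
  div_le_one_of_le₀ (by linarith) (Nat.cast_nonneg d)

theorem two_thirds_le_alphaOf (hd : 3 ≤ d) : 2 / 3 ≤ alphaOf d := by
  have h : (3 : ℝ) ≤ d := by exact_mod_cast hd
  rw [alphaOf, le_div_iff₀ (by linarith)]
  linarith

theorem mul_rpow_alphaOf_sub_one_le (hd : 3 ≤ d) {y : ℝ} (hy : 8 ^ d ≤ y) :
    alphaOf d * y ^ (alphaOf d - 1) ≤ 1 / 8 := by
  have hd0 : (d : ℝ) ≠ 0 := by positivity
  have hsub : alphaOf d - 1 = -(d : ℝ)⁻¹ := by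
    rw [alphaOf]
    field_simp
    ring
  have hpow : ((8 : ℝ) ^ d) ^ (alphaOf d - 1) = 1 / 8 := by
    rw [hsub, ← rpow_natCast, ← rpow_mul (by norm_num), mul_neg, mul_inv_cancel₀ hd0,
      rpow_neg_one, one_div]
  have hy0 : 0 ≤ y := (by positivity : (0 : ℝ) ≤ 8 ^ d).trans hy
  calc alphaOf d * y ^ (alphaOf d - 1) ≤ 1 * ((8 : ℝ) ^ d) ^ (alphaOf d - 1) :=
        mul_le_mul (alphaOf_le_one d)
          (rpow_le_rpow_of_nonpos (by positivity) hy (by linarith [alphaOf_le_one d]))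
          (rpow_nonneg hy0 _) zero_le_one
    _ = 1 / 8 := by rw [one_mul, hpow]

theorem four_ninths_le_rpow_mul_sq (hd : 3 ≤ d) {y : ℝ} (hy : 1 ≤ y) :
    4 / 9 ≤ y ^ alphaOf d * (alphaOf d * y ^ (alphaOf d - 1)) ^ 2 := by
  have hα := two_thirds_le_alphaOf hd
  have hy0 : 0 < y := by linarith
  have hexp : y ^ alphaOf d * (y ^ (alphaOf d - 1)) ^ 2 = y ^ (3 * alphaOf d - 2) := by
    rw [sq, ← rpow_add hy0, ← rpow_add hy0]
    ring_nf
  have hone : 1 ≤ y ^ (3 * alphaOf d - 2) := one_le_rpow hy (by linarith)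
  calc (4 : ℝ) / 9 ≤ alphaOf d ^ 2 * y ^ (3 * alphaOf d - 2) := by nlinarith
    _ = _ := by rw [← hexp]; ring

def lyapunov (d x : ℕ) : ℝ := exp ((x : ℝ) ^ alphaOf d / 2)

def conductance (d N x : ℕ) : ℝ := muToy d N x * bToy d x

-- Past the cutoff, `x ^ α - (x - 1) ^ α ≤ α (x - 1) ^ (-1 / d) ≤ 1 / 8`.
def cutoff (d : ℕ) : ℕ := 8 ^ d + 1

theorem Ztoy_pos (d N : ℕ) : 0 < Ztoy d N :=
  sum_pos (fun _ _ => exp_pos _) nonempty_range_add_one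

theorem muToy_pos (x : ℕ) : 0 < muToy d N x := div_pos (exp_pos _) (Ztoy_pos d N)

theorem sum_muToy : ∑ x ∈ range (N ^ d + 1), muToy d N x = 1 := by
  simp only [muToy]
  rw [← sum_div, ← Ztoy, div_self (Ztoy_pos d N).ne']

theorem muToy_le_inv (x : ℕ) : muToy d N x ≤ (Ztoy d N)⁻¹ := by
  rw [muToy, div_eq_mul_inv]
  exact mul_le_of_le_one_left (inv_pos.2 (Ztoy_pos d N)).le
    (exp_le_one_iff.2 (neg_nonpos.2 (rpow_nonneg (Nat.cast_nonneg x) _)))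

theorem muToy_eq_muToy_succ_mul (n : ℕ) :
    muToy d N n = muToy d N (n + 1) * exp (((n : ℝ) + 1) ^ alphaOf d - (n : ℝ) ^ alphaOf d) := by
  rw [muToy, muToy, div_mul_eq_mul_div, ← exp_add]
  push_cast
  ring_nf

theorem bToy_of_pos {x : ℕ} (hx : 0 < x) : bToy d x = (x : ℝ) ^ alphaOf d := by
  rw [bToy, max_eq_left hx]

theorem one_le_bToy (x : ℕ) : 1 ≤ bToy d x :=
  one_le_rpow (by exact_mod_cast Nat.le_max_right x 1) (alphaOf_nonneg d)

theorem bToy_le (x : ℕ) : bToy d x ≤ (max x 1 : ℕ) :=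
  rpow_le_self_of_one_le (by exact_mod_cast Nat.le_max_right x 1) (alphaOf_le_one d)

theorem rpow_le_bToy (x : ℕ) : (x : ℝ) ^ alphaOf d ≤ bToy d x :=
  rpow_le_rpow (Nat.cast_nonneg x) (by exact_mod_cast Nat.le_max_left x 1) (alphaOf_nonneg d)

theorem conductance_nonneg (x : ℕ) : 0 ≤ conductance d N x :=
  mul_nonneg (muToy_pos x).le (zero_le_one.trans (one_le_bToy x))

theorem lyapunov_pos (x : ℕ) : 0 < lyapunov d x := exp_pos _

theorem lyapunov_div_lyapunov (m k : ℕ) :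
    lyapunov d m / lyapunov d k = exp (((m : ℝ) ^ alphaOf d - (k : ℝ) ^ alphaOf d) / 2) := by
  rw [lyapunov, lyapunov, ← exp_sub, sub_div]

theorem monotone_lyapunov : Monotone (lyapunov d) := fun _ _ h =>
  exp_le_exp.2 (by gcongr; exact alphaOf_nonneg d)

theorem lyapunov_succ_le (x : ℕ) : lyapunov d (x + 1) ≤ 2 * lyapunov d x := by
  have hinc : ((x : ℝ) + 1) ^ alphaOf d ≤ (x : ℝ) ^ alphaOf d + 1 := by
    simpa using rpow_add_le_add_rpow (Nat.cast_nonneg x) zero_le_one (alphaOf_nonneg d)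
      (alphaOf_le_one d)
  have hhalf : exp (1 / 2) ≤ 2 := by
    have hneg := add_one_le_exp (-(1 / 2) : ℝ)
    have hprod : exp (1 / 2) * exp (-(1 / 2)) = 1 := by rw [← exp_add]; norm_num
    nlinarith [exp_pos (1 / 2 : ℝ)]
  rw [← div_le_iff₀ (lyapunov_pos x), lyapunov_div_lyapunov]
  push_cast
  exact (exp_le_exp.2 (by linarith)).trans hhalf

theorem conductance_mul_one_sub_lyapunov_div_succ (n : ℕ) :
    conductance d N (n + 1) * (1 - lyapunov d (n + 1 + 1) / lyapunov d (n + 1)) =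
      muToy d N (n + 1) * (((n : ℝ) + 1) ^ alphaOf d *
        (1 - exp ((((n : ℝ) + 1 + 1) ^ alphaOf d - ((n : ℝ) + 1) ^ alphaOf d) / 2))) := by
  rw [conductance, bToy_of_pos n.succ_pos, lyapunov_div_lyapunov]
  push_cast
  ring

theorem conductance_mul_one_sub_lyapunov_div_pred {n : ℕ} (hn : 0 < n) :
    conductance d N n * (1 - lyapunov d n / lyapunov d (n + 1)) =
      muToy d N (n + 1) * ((n : ℝ) ^ alphaOf d * (exp (((n : ℝ) + 1) ^ alphaOf d -
        (n : ℝ) ^ alphaOf d) - exp ((((n : ℝ) + 1) ^ alphaOf d - (n : ℝ) ^ alphaOf d) / 2))) := by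
  rw [conductance, bToy_of_pos hn, lyapunov_div_lyapunov, muToy_eq_muToy_succ_mul]
  push_cast
  set t := ((n : ℝ) + 1) ^ alphaOf d - (n : ℝ) ^ alphaOf d with ht_def
  have hhalf : exp t * exp (((n : ℝ) ^ alphaOf d - ((n : ℝ) + 1) ^ alphaOf d) / 2) =
      exp (t / 2) := by
    rw [← exp_add, ht_def]
    ring_nf
  linear_combination (-(muToy d N (n + 1) * (n : ℝ) ^ alphaOf d)) * hhalf

theorem mul_muToy_le_driftWeight (hd : 3 ≤ d) {n : ℕ} (hn : 8 ^ d ≤ n) (M : ℕ) :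
    1 / 25 * muToy d N (n + 1) ≤ driftWeight (conductance d N) (lyapunov d) M (n + 1) := by
  have hα0 : 0 ≤ alphaOf d := alphaOf_nonneg d
  have hα1 : alphaOf d ≤ 1 := alphaOf_le_one d
  have hy8 : (8 : ℝ) ^ d ≤ n := by exact_mod_cast hn
  have hy : (1 : ℝ) ≤ n := le_trans (one_le_pow₀ (by norm_num)) hy8
  have hn0 : 0 < n := by exact_mod_cast zero_lt_one.trans_le hy
  set a := ((n : ℝ) + 1) ^ alphaOf d
  set t := a - (n : ℝ) ^ alphaOf d with ht_def
  have hslope := mul_rpow_le_rpow_add_one_sub_rpow hα0 hα1 (Nat.cast_nonneg n)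
  have ht0 : 0 < t := lt_of_lt_of_le (mul_pos (by linarith [two_thirds_le_alphaOf hd])
    (rpow_pos_of_pos (by linarith) _)) hslope
  have ht : t ≤ 1 / 8 :=
    (rpow_add_one_sub_rpow_le hα0 hα1 (by linarith)).trans (mul_rpow_alphaOf_sub_one_le hd hy8)
  have hat : 4 / 9 ≤ a * t ^ 2 := (four_ninths_le_rpow_mul_sq hd (by linarith)).trans
    (mul_le_mul_of_nonneg_left (pow_le_pow_left₀ (by positivity) hslope 2) (by positivity))
  obtain ⟨s, hs0, hst, hright⟩ : ∃ s, 0 ≤ s ∧ s ≤ t ∧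
      (if n + 1 < M then conductance d N (n + 1) *
        (1 - lyapunov d (n + 1 + 1) / lyapunov d (n + 1)) else 0) =
      muToy d N (n + 1) * (a * (1 - exp (s / 2))) := by
    split_ifs
    · refine ⟨((n : ℝ) + 1 + 1) ^ alphaOf d - a, ?_, ?_,
        conductance_mul_one_sub_lyapunov_div_succ n⟩
      · exact sub_nonneg.2 (rpow_le_rpow (by positivity) (by linarith) hα0)
      · exact (rpow_add_one_sub_rpow_le hα0 hα1 (by positivity)).trans hslope
    · exact ⟨0, le_rfl, ht0.le, by simp⟩
  rw [driftWeight, if_neg n.succ_ne_zero, Nat.add_sub_cancel, hright,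
    conductance_mul_one_sub_lyapunov_div_pred hn0, ← mul_add, mul_comm]
  have hdrift := one_div_twentyfive_le_drift ht0 ht hs0 hst hat
  rw [show a - t = (n : ℝ) ^ alphaOf d by ring] at hdrift
  exact mul_le_mul_of_nonneg_left hdrift (muToy_pos _).le

theorem neg_mul_muToy_le_driftWeight {R x : ℕ} (hx : x < R) (M : ℕ) :
    -(R * muToy d N x) ≤ driftWeight (conductance d N) (lyapunov d) M x := by
  refine le_trans ?_ (neg_le_driftWeight conductance_nonneg lyapunov_pos monotone_lyapunov
    lyapunov_succ_le M x)
  rw [neg_le_neg_iff, conductance, mul_comm]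
  exact mul_le_mul_of_nonneg_right
    ((bToy_le x).trans (by exact_mod_cast max_le hx.le (by omega))) (muToy_pos x).le

theorem muToy_le_exp_mul_conductance (x : ℕ) {R z : ℕ} (hz : z < R) :
    muToy d N x ≤ exp R * conductance d N z := by
  have hzR : (z : ℝ) ^ alphaOf d ≤ R :=
    (rpow_le_bToy z).trans ((bToy_le z).trans (by exact_mod_cast max_le hz.le (by omega)))
  calc muToy d N x ≤ (Ztoy d N)⁻¹ := muToy_le_inv x
    _ = exp R * (exp (-R) / Ztoy d N) := by
        rw [div_eq_mul_inv, ← mul_assoc, ← exp_add, add_neg_cancel, exp_zero, one_mul]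
    _ ≤ exp R * muToy d N z := by
        rw [muToy]
        gcongr
        exact (Ztoy_pos d N).le
    _ ≤ exp R * conductance d N z := by
        gcongr
        exact le_mul_of_one_le_right (muToy_pos z).le (one_le_bToy z)

def poincareConst (d : ℕ) : ℝ :=
  25 * (1 + cutoff d * ((1 / 25 + cutoff d) * cutoff d * exp (cutoff d)))

theorem poincareConst_pos (d : ℕ) : 0 < poincareConst d := by
  rw [poincareConst]
  positivity

theorem varToy_le_poincareConst_mul_dirToy (hd : 3 ≤ d) (N : ℕ) (f : ℕ → ℝ) :
    varToy d N f ≤ poincareConst d * dirToy d N f := by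
  have hfar : ∀ x ≤ N ^ d, cutoff d ≤ x →
      1 / 25 * muToy d N x ≤ driftWeight (conductance d N) (lyapunov d) (N ^ d) x := by
    intro x _ hx
    rw [cutoff] at hx
    obtain ⟨n, rfl⟩ : ∃ n, x = n + 1 :=
      ⟨x - 1, (Nat.sub_add_cancel (le_of_add_le_right hx)).symm⟩
    exact mul_muToy_le_driftWeight hd (Nat.le_of_succ_le_succ hx) _
  have hcrit := mul_sum_mul_sq_le_energy_of_drift (fun x => (muToy_pos x).le)
    conductance_nonneg lyapunov_pos (by norm_num) (Nat.cast_nonneg _) (exp_pos _).le hfar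
    (fun _ hx => neg_mul_muToy_le_driftWeight hx _)
    (fun x hx _ hz => muToy_le_exp_mul_conductance x (hz.trans hx))
    (g := fun x => f x - f 0) (sub_self _)
  calc varToy d N f ≤ ∑ x ∈ range (N ^ d + 1), muToy d N x * (f x - f 0) ^ 2 :=
        sum_mul_sq_sub_sum_mul_le sum_muToy f (f 0)
    _ ≤ poincareConst d * energy (conductance d N) (N ^ d) (fun x => f x - f 0) := by
        rw [poincareConst, mul_assoc]
        linarith
    _ = poincareConst d * dirToy d N f := by rw [energy_sub_const]; rfl

theorem invGapToy_le {c : ℝ} (hc : 0 ≤ c) (h : ∀ f, varToy d N f ≤ c * dirToy d N f) :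
    invGapToy d N ≤ c := by
  by_cases hb : BddBelow {c : ℝ | ∀ f : ℕ → ℝ, varToy d N f ≤ c * dirToy d N f}
  · exact csInf_le hb h
  · rw [invGapToy, Real.sInf_of_not_bddBelow hb]
    exact hc

end ToyModel

theorem toy_invGap_bounded_high_dim (d : ℕ) (hd : 3 ≤ d) :
    ∃ k : ℝ, 0 < k ∧ ∀ N : ℕ, 1 ≤ N → invGapToy d N ≤ k :=
  ⟨ToyModel.poincareConst d, ToyModel.poincareConst_pos d, fun N _ =>
    ToyModel.invGapToy_le (ToyModel.poincareConst_pos d).le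
      (ToyModel.varToy_le_poincareConst_mul_dirToy hd N)⟩
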